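/- arXiv:1401.6823 — 2 statements merged into one kernel-verified Lean document; each statement's English description precedes it below -/
import Mathlib

section
/- Let C and n be positive integers such that (C+1) divides n and (C+1)² ≤ n, and set m = C·n. Then: (a) every general two-coloring of the complete graph K_n with exactly m unicolored edges contains a monochromatic clique on n/(C+1) vertices; and (b) there exists a general two-coloring of K_n with exactly m unicolored edges in which every monochromatic clique has at most n/(C+1) vertices. (That is, f(n,m) = n/(m/n + 1) under these divisibility conditions.) -/
/-!
Split the unicolored edges into the red-only graph `R` and the blue-only graph `B`. A set
independent in `R` is a blue clique, and one independent in `B` a red clique. Since `R` and `B`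
have `C n` edges together, one of them has average degree at most `C`, and the Caro–Wei
(Turán) bound `α ≥ n² / (2e + n)` gives it an independent set of size `n / (C + 1)`.

For the construction write the vertices as a grid `ℤ/k × {0, …, C}` with `k = n / (C + 1)`,
let the red-only edges join vertices in the same row `r` and the blue-only edges vertices on the
same diagonal `r - j`, and make all other edges bicolored. As `C + 1 ≤ k`, a row and a diagonal
meet in at most one vertex, so the two graphs are disjoint unions of `k` copies of `K_{C+1}`,
with `C n` edges in total; a red clique meets every diagonal at most once and a blue clique
meets every row at most once.
-/

/-- A general two-coloring of `K_n`: symmetric red/blue predicates such that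
every pair of distinct vertices receives at least one color. -/
structure GenTwoColoring (n : ℕ) where
  red : Fin n → Fin n → Bool
  blue : Fin n → Fin n → Bool
  red_symm : ∀ i j, red i j = red j i
  blue_symm : ∀ i j, blue i j = blue j i
  total : ∀ i j, i ≠ j → red i j = true ∨ blue i j = true

/-- The number of bicolored edges (unordered pairs receiving both colors). -/
def GenTwoColoring.bicoloredCount {n : ℕ} (c : GenTwoColoring n) : ℕ :=
  (Finset.univ.filter fun p : Fin n × Fin n =>
    p.1 < p.2 ∧ c.red p.1 p.2 = true ∧ c.blue p.1 p.2 = true).card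

/-- The number of unicolored edges (unordered pairs receiving exactly one color). -/
def GenTwoColoring.unicoloredCount {n : ℕ} (c : GenTwoColoring n) : ℕ :=
  (Finset.univ.filter fun p : Fin n × Fin n =>
    p.1 < p.2 ∧ ¬(c.red p.1 p.2 = true ∧ c.blue p.1 p.2 = true)).card

/-- `S` is a monochromatic clique: one single color belongs to the color set of
every pair of distinct vertices of `S`. -/
def GenTwoColoring.IsMonoClique {n : ℕ} (c : GenTwoColoring n) (S : Finset (Fin n)) : Prop :=
  (∀ i ∈ S, ∀ j ∈ S, i ≠ j → c.red i j = true) ∨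
  (∀ i ∈ S, ∀ j ∈ S, i ≠ j → c.blue i j = true)

open Finset

theorem Nat.sq_le_succ_mul_of_greedy_step {a m δ D D' : ℕ}
    (ih : (m - (δ + 1)) ^ 2 ≤ a * (D' + (m - (δ + 1)))) (hD : D' + (δ + 1) * δ ≤ D)
    (hmin : m * δ ≤ D) (hm : δ + 1 ≤ m) : m ^ 2 ≤ (a + 1) * (D + m) := by
  obtain ⟨m', rfl⟩ := Nat.exists_eq_add_of_le hm
  rw [Nat.add_sub_cancel_left] at ih
  rcases le_or_gt ((δ + 1 + m') ^ 2) (D + (δ + 1 + m')) with h | h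
  · nlinarith
  rcases Nat.eq_zero_or_pos (D' + m') with h0 | h0
  · obtain rfl : m' = 0 := by omega
    nlinarith
  · zify at *
    -- `(m - t)² s - (m² - s)(s - t²) = (m t - s)²` with `t = δ + 1`, `s = D + m`
    have key : ((δ + 1 + m' : ℤ) ^ 2 - (D + (δ + 1 + m'))) * (D' + m') ≤
        a * (D + (δ + 1 + m')) * (D' + m') := by
      nlinarith [sq_nonneg (((δ : ℤ) + 1 + m') * (δ + 1) - (D + (δ + 1 + m'))),
        mul_le_mul_of_nonneg_left
          (show (D' + m' : ℤ) ≤ D + (δ + 1 + m') - (δ + 1) ^ 2 by linarith)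
          (show (0 : ℤ) ≤ (δ + 1 + m') ^ 2 - (D + (δ + 1 + m')) by linarith)]
    nlinarith [le_of_mul_le_mul_right key h0]

theorem Finset.card_filter_eq_card_of_bijective {α β γ : Type*} [Fintype α] [Fintype β]
    [DecidableEq γ] {f : α × β → γ} (hf : ∀ j, (fun a => f (a, j)).Bijective) (c : γ) :
    #{x | f x = c} = Fintype.card β := by
  rw [← card_univ]
  refine card_nbij' Prod.snd (fun j => ((Equiv.ofBijective _ (hf j)).symm c, j))
    (by simp [Set.MapsTo]) (fun j _ => ?_) (fun x hx => ?_) (fun j _ => rfl)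
  · exact mem_filter.2 ⟨mem_univ _, (Equiv.ofBijective _ (hf j)).apply_symm_apply c⟩
  · obtain ⟨a, j⟩ := x
    simp only [coe_filter, mem_univ, true_and, Set.mem_ofPred_eq] at hx
    simp [← hx]

namespace SimpleGraph

variable {V : Type*}

section CaroWei

variable (G : SimpleGraph V) [DecidableRel G.Adj]

-- Greedy proof: put a vertex of minimum degree into the set and delete its closed neighbourhood.
theorem exists_isIndepSet_subset_sq_card_le [DecidableEq V] (A : Finset V) :
    ∃ S ⊆ A, G.IsIndepSet (S : Set V) ∧
      #A ^ 2 ≤ #S * (∑ v ∈ A, #{w ∈ A | G.Adj v w} + #A) := by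
  induction A using Finset.strongInduction with
  | H A ih =>
  rcases A.eq_empty_or_nonempty with rfl | hA
  · exact ⟨∅, subset_rfl, by simp, by simp⟩
  obtain ⟨v, hvA, hvmin⟩ := A.exists_min_image (fun x => #{w ∈ A | G.Adj x w}) hA
  set δ := #{w ∈ A | G.Adj v w}
  set N := insert v {w ∈ A | G.Adj v w}
  have hNA : N ⊆ A := insert_subset hvA (filter_subset _ _)
  have hN : #N = δ + 1 := card_insert_of_notMem (by simp)
  obtain ⟨S, hSA, hS, hbound⟩ := ih (A \ N) (sdiff_ssubset hNA (insert_nonempty _ _))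
  have hvS : v ∉ S := fun h => (mem_sdiff.1 (hSA h)).2 (mem_insert_self _ _)
  refine ⟨insert v S, insert_subset hvA (hSA.trans sdiff_subset), ?_, ?_⟩
  · have hv : ∀ w ∈ S, ¬G.Adj v w := fun w hw hvw => by
      obtain ⟨hwA, hwN⟩ := mem_sdiff.1 (hSA hw)
      exact hwN (mem_insert_of_mem (mem_filter.2 ⟨hwA, hvw⟩))
    rw [coe_insert]
    exact hS.insert fun w hw _ => ⟨hv w hw, fun h => hv w hw h.symm⟩
  · have hdeg : ∑ x ∈ A \ N, #{w ∈ A \ N | G.Adj x w} + (δ + 1) * δ ≤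
        ∑ x ∈ A, #{w ∈ A | G.Adj x w} :=
      calc _ ≤ ∑ x ∈ A \ N, #{w ∈ A | G.Adj x w} + ∑ x ∈ N, #{w ∈ A | G.Adj x w} := by
            gcongr with x
            · exact sdiff_subset
            · simpa [hN] using N.card_nsmul_le_sum _ _ fun x hx => hvmin x (hNA hx)
        _ = _ := sum_sdiff hNA
    have hmin : #A * δ ≤ ∑ x ∈ A, #{w ∈ A | G.Adj x w} := by
      simpa using A.card_nsmul_le_sum _ _ hvmin
    rw [card_insert_of_notMem hvS]
    rw [card_sdiff_of_subset hNA, hN] at hbound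
    exact Nat.sq_le_succ_mul_of_greedy_step hbound hdeg hmin (hN ▸ card_le_card hNA)

variable [Fintype V]

theorem exists_isIndepSet_sq_card_le :
    ∃ S : Finset V, G.IsIndepSet (S : Set V) ∧
      Fintype.card V ^ 2 ≤ #S * (2 * #G.edgeFinset + Fintype.card V) := by
  classical
  obtain ⟨S, -, hS, hbound⟩ := G.exists_isIndepSet_subset_sq_card_le univ
  refine ⟨S, hS, ?_⟩
  simpa [← sum_degrees_eq_twice_card_edges, ← card_neighborFinset_eq_degree,
    neighborFinset_eq_filter] using hbound

theorem exists_isNIndepSet_of_two_mul_card_edgeFinset_le {C k : ℕ}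
    (hV : Fintype.card V = (C + 1) * k) (hE : 2 * #G.edgeFinset ≤ C * Fintype.card V) :
    ∃ S : Finset V, G.IsNIndepSet k S := by
  obtain ⟨S, hS, hbound⟩ := G.exists_isIndepSet_sq_card_le
  have hk : k ≤ #S := by
    rcases Nat.eq_zero_or_pos k with rfl | hk
    · exact Nat.zero_le _
    have : k * ((C + 1) ^ 2 * k) ≤ #S * ((C + 1) ^ 2 * k) := by
      rw [hV] at hbound hE
      nlinarith
    exact Nat.le_of_mul_le_mul_right this (by positivity)
  obtain ⟨T, hTS, hT⟩ := exists_subset_card_eq hk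
  exact ⟨T, hS.mono (coe_subset.2 hTS), hT⟩

theorem card_filter_lt_adj [LinearOrder V] :
    #{p : V × V | p.1 < p.2 ∧ G.Adj p.1 p.2} = #G.edgeFinset := by
  refine card_nbij' (fun p => s(p.1, p.2)) (fun e => (e.inf, e.sup)) ?_ ?_ ?_ ?_
  · rintro ⟨a, b⟩ h
    simp_all
  · intro e he
    induction e with | _ a b
    have hab : a ≠ b := G.ne_of_adj (by simpa using he)
    rcases hab.lt_or_gt with h | h
    · simp_all [h.le]
    · simp_all [h.le, G.adj_comm b a]
  · rintro ⟨a, b⟩ h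
    simp_all [le_of_lt]
  · intro e _
    exact Sym2.sortEquiv.symm_apply_apply e

end CaroWei

section SameFiber

variable {W : Type*} (f : V → W)

def sameFiber : SimpleGraph V where
  Adj v w := v ≠ w ∧ f v = f w
  symm := ⟨fun _ _ h => ⟨h.1.symm, h.2.symm⟩⟩
  loopless := ⟨fun _ h => h.1 rfl⟩

variable {f}

@[simp]
theorem sameFiber_adj {v w : V} : (sameFiber f).Adj v w ↔ v ≠ w ∧ f v = f w := Iff.rfl

instance [DecidableEq V] [DecidableEq W] : DecidableRel (sameFiber f).Adj :=
  fun _ _ => inferInstanceAs (Decidable (_ ∧ _))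

theorem isIndepSet_sameFiber_iff {s : Set V} : (sameFiber f).IsIndepSet s ↔ s.InjOn f := by
  simp only [IsIndepSet, Set.Pairwise, Set.InjOn, sameFiber_adj, not_and]
  exact ⟨fun h v hv w hw hvw => by_contra fun hne => h hv hw hne hne hvw,
    fun h v hv w hw hne _ hvw => hne (h hv hw hvw)⟩

theorem card_le_of_isIndepSet_sameFiber [Fintype W] {S : Finset V}
    (hS : (sameFiber f).IsIndepSet (S : Set V)) : #S ≤ Fintype.card W :=
  (card_le_card_of_injOn f (fun _ _ => mem_univ _) (isIndepSet_sameFiber_iff.1 hS)).trans_eq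
    card_univ

theorem disjoint_sameFiber {g : V → W} (hfg : ∀ v w, f v = f w → g v = g w → v = w) :
    Disjoint (sameFiber f) (sameFiber g) :=
  disjoint_left.2 fun v w hf hg => hf.1 (hfg v w hf.2 hg.2)

variable [Fintype V] [DecidableEq V] [DecidableEq W]

theorem degree_sameFiber (v : V) : (sameFiber f).degree v = #{w | f w = f v} - 1 := by
  rw [← card_neighborFinset_eq_degree, neighborFinset_eq_filter,
    ← card_erase_of_mem (s := {w | f w = f v}) (a := v) (by simp)]
  congr 1
  ext w
  simp [eq_comm, and_comm]

theorem two_mul_card_edgeFinset_sameFiber {d : ℕ} (hf : ∀ v, #{w | f w = f v} = d + 1) :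
    2 * #(sameFiber f).edgeFinset = Fintype.card V * d := by
  simp [← sum_degrees_eq_twice_card_edges, degree_sameFiber, hf]

end SameFiber

end SimpleGraph

namespace GenTwoColoring

variable {n : ℕ} (c : GenTwoColoring n)

def redOnly : SimpleGraph (Fin n) where
  Adj i j := i ≠ j ∧ c.red i j = true ∧ c.blue i j = false
  symm := ⟨fun i j h => ⟨h.1.symm, c.red_symm i j ▸ h.2.1, c.blue_symm i j ▸ h.2.2⟩⟩
  loopless := ⟨fun _ h => h.1 rfl⟩

def blueOnly : SimpleGraph (Fin n) where
  Adj i j := i ≠ j ∧ c.blue i j = true ∧ c.red i j = false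
  symm := ⟨fun i j h => ⟨h.1.symm, c.blue_symm i j ▸ h.2.1, c.red_symm i j ▸ h.2.2⟩⟩
  loopless := ⟨fun _ h => h.1 rfl⟩

instance : DecidableRel c.redOnly.Adj := fun _ _ => inferInstanceAs (Decidable (_ ∧ _))

instance : DecidableRel c.blueOnly.Adj := fun _ _ => inferInstanceAs (Decidable (_ ∧ _))

theorem unicoloredCount_eq_add :
    c.unicoloredCount = #c.redOnly.edgeFinset + #c.blueOnly.edgeFinset := by
  rw [← SimpleGraph.card_filter_lt_adj, ← SimpleGraph.card_filter_lt_adj,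
    ← card_union_of_disjoint, ← filter_or, unicoloredCount]
  · refine congrArg card (filter_congr fun p _ => ?_)
    have := c.total p.1 p.2
    cases hr : c.red p.1 p.2 <;> cases hb : c.blue p.1 p.2 <;>
      simp_all [redOnly, blueOnly, ne_of_lt]
  · refine disjoint_filter.2 fun p _ h h' => ?_
    simp_all [redOnly, blueOnly]

variable {c}

theorem isMonoClique_of_isIndepSet_redOnly {S : Finset (Fin n)}
    (hS : c.redOnly.IsIndepSet (S : Set (Fin n))) : c.IsMonoClique S := by
  refine Or.inr fun i hi j hj hij => ?_
  have := hS hi hj hij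
  have := c.total i j hij
  cases hr : c.red i j <;> cases hb : c.blue i j <;> simp_all [redOnly]

theorem isMonoClique_of_isIndepSet_blueOnly {S : Finset (Fin n)}
    (hS : c.blueOnly.IsIndepSet (S : Set (Fin n))) : c.IsMonoClique S := by
  refine Or.inl fun i hi j hj hij => ?_
  have := hS hi hj hij
  have := c.total i j hij
  cases hr : c.red i j <;> cases hb : c.blue i j <;> simp_all [blueOnly]

theorem exists_isMonoClique_card_eq {C k : ℕ} (hn : n = (C + 1) * k)
    (hc : c.unicoloredCount = C * n) : ∃ S : Finset (Fin n), #S = k ∧ c.IsMonoClique S := by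
  rw [unicoloredCount_eq_add] at hc
  have hV : Fintype.card (Fin n) = (C + 1) * k := by rw [Fintype.card_fin, hn]
  rcases le_total (2 * #c.redOnly.edgeFinset) (C * n) with h | h
  · obtain ⟨S, hS, hSk⟩ :=
      c.redOnly.exists_isNIndepSet_of_two_mul_card_edgeFinset_le hV (by simpa using h)
    exact ⟨S, hSk, isMonoClique_of_isIndepSet_redOnly hS⟩
  · obtain ⟨S, hS, hSk⟩ :=
      c.blueOnly.exists_isNIndepSet_of_two_mul_card_edgeFinset_le hV (by simp; omega)
    exact ⟨S, hSk, isMonoClique_of_isIndepSet_blueOnly hS⟩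

section OfDisjoint

variable (R B : SimpleGraph (Fin n)) [DecidableRel R.Adj] [DecidableRel B.Adj]

def ofDisjoint (h : Disjoint R B) : GenTwoColoring n where
  red i j := !decide (B.Adj i j)
  blue i j := !decide (R.Adj i j)
  red_symm i j := by simp [B.adj_comm]
  blue_symm i j := by simp [R.adj_comm]
  total i j _ := by
    by_contra hij
    simp only [Bool.not_eq_eq_eq_not, Bool.not_true, decide_eq_false_iff_not, not_or,
      not_not] at hij
    exact SimpleGraph.disjoint_left.1 h i j hij.2 hij.1

variable {R B} (h : Disjoint R B)

theorem redOnly_ofDisjoint : (ofDisjoint R B h).redOnly = R := by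
  ext i j
  have := SimpleGraph.disjoint_left.1 h i j
  simp only [redOnly, ofDisjoint]
  by_cases hR : R.Adj i j <;> simp_all [R.ne_of_adj]

theorem blueOnly_ofDisjoint : (ofDisjoint R B h).blueOnly = B := by
  ext i j
  have := SimpleGraph.disjoint_left.1 h.symm i j
  simp only [blueOnly, ofDisjoint]
  by_cases hB : B.Adj i j <;> simp_all [B.ne_of_adj]

theorem unicoloredCount_ofDisjoint :
    (ofDisjoint R B h).unicoloredCount = #R.edgeFinset + #B.edgeFinset := by
  rw [unicoloredCount_eq_add]
  congr 2
  · exact SimpleGraph.edgeFinset_inj.2 (redOnly_ofDisjoint h)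
  · exact SimpleGraph.edgeFinset_inj.2 (blueOnly_ofDisjoint h)

theorem isIndepSet_of_isMonoClique_ofDisjoint {S : Finset (Fin n)}
    (hS : (ofDisjoint R B h).IsMonoClique S) :
    B.IsIndepSet (S : Set (Fin n)) ∨ R.IsIndepSet (S : Set (Fin n)) := by
  simpa [IsMonoClique, ofDisjoint, SimpleGraph.IsIndepSet, Set.Pairwise] using hS

end OfDisjoint

theorem exists_unicoloredCount_eq_of_labelings {W : Type*} [Fintype W] [DecidableEq W] {d : ℕ}
    (f g : Fin n → W) (hfg : ∀ v w, f v = f w → g v = g w → v = w)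
    (hf : ∀ v, #{w | f w = f v} = d + 1) (hg : ∀ v, #{w | g w = g v} = d + 1) :
    ∃ c : GenTwoColoring n, c.unicoloredCount = d * n ∧
      ∀ S : Finset (Fin n), c.IsMonoClique S → #S ≤ Fintype.card W := by
  refine ⟨ofDisjoint _ _ (SimpleGraph.disjoint_sameFiber hfg), ?_, fun S hS => ?_⟩
  · have hR := SimpleGraph.two_mul_card_edgeFinset_sameFiber hf
    have hB := SimpleGraph.two_mul_card_edgeFinset_sameFiber hg
    rw [Fintype.card_fin] at hR hB
    rw [unicoloredCount_ofDisjoint]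
    linarith [mul_comm n d]
  · rcases isIndepSet_of_isMonoClique_ofDisjoint _ hS with h | h <;>
      exact SimpleGraph.card_le_of_isIndepSet_sameFiber h

theorem exists_unicoloredCount_eq_forall_isMonoClique_card_le {C k : ℕ} (hk : C + 1 ≤ k)
    (hn : n = (C + 1) * k) :
    ∃ c : GenTwoColoring n, c.unicoloredCount = C * n ∧
      ∀ S : Finset (Fin n), c.IsMonoClique S → #S ≤ k := by
  have : NeZero k := ⟨by omega⟩
  let σ : Fin n ≃ Fin k × Fin (C + 1) :=
    (finCongr (hn.trans (mul_comm _ _))).trans finProdFinEquiv.symm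
  have hfiber (f : Fin k × Fin (C + 1) → Fin k) (hf : ∀ j, (fun a => f (a, j)).Bijective)
      (v : Fin n) : #{w | f (σ w) = f (σ v)} = C + 1 := by
    rw [card_equiv σ (t := {x | f x = f (σ v)}) (by simp),
      card_filter_eq_card_of_bijective hf, Fintype.card_fin]
  simpa using exists_unicoloredCount_eq_of_labelings (fun v => (σ v).1)
    (fun v => (σ v).1 - Fin.castLE hk (σ v).2)
    (fun v w h1 h2 => σ.injective (Prod.ext h1 (Fin.castLE_injective hk (by simpa [h1] using h2))))
    (hfiber Prod.fst fun _ => Function.bijective_id)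
    (hfiber (fun x => x.1 - Fin.castLE hk x.2) fun j =>
      (Equiv.subRight (Fin.castLE hk j)).bijective)

end GenTwoColoring

theorem stmt16_general (C n : ℕ) (hdvd : (C + 1) ∣ n)
    (hsq : (C + 1) ^ 2 ≤ n) :
    (∀ c : GenTwoColoring n, c.unicoloredCount = C * n →
      ∃ S : Finset (Fin n), S.card = n / (C + 1) ∧ c.IsMonoClique S) ∧
    (∃ c : GenTwoColoring n, c.unicoloredCount = C * n ∧
      ∀ S : Finset (Fin n), c.IsMonoClique S → S.card ≤ n / (C + 1)) := by
  obtain ⟨k, rfl⟩ := hdvd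
  have hk : C + 1 ≤ k := Nat.le_of_mul_le_mul_left (by rwa [← sq]) (Nat.succ_pos C)
  rw [Nat.mul_div_cancel_left _ (Nat.succ_pos C)]
  exact ⟨fun c hc => c.exists_isMonoClique_card_eq rfl hc,
    GenTwoColoring.exists_unicoloredCount_eq_forall_isMonoClique_card_le hk rfl⟩

theorem stmt16 (C n : ℕ) (hC : 0 < C) (hn : 0 < n) (hdvd : (C + 1) ∣ n)
    (hsq : (C + 1) ^ 2 ≤ n) :
    (∀ c : GenTwoColoring n, c.unicoloredCount = C * n →
      ∃ S : Finset (Fin n), S.card = n / (C + 1) ∧ c.IsMonoClique S) ∧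
    (∃ c : GenTwoColoring n, c.unicoloredCount = C * n ∧
      ∀ S : Finset (Fin n), c.IsMonoClique S → S.card ≤ n / (C + 1)) :=
  stmt16_general C n hdvd hsq
end

section
/- Let n and k be integers with k ≥ 5 and n ≥ 2k². If (k−2)·log₂ n < k(k−1)/2 − 4·log₂ k − 0.71, then there exists a tournament on n vertices containing no transitive subtournament on k vertices. (This is the explicit sufficient condition derived in the proof of Theorem 4.2, giving F(n) < 2log₂ n − 1 + o(1).) -/
/-- A tournament on `{0,…,r-1}`: loopless, and for every pair of distinct
vertices exactly one of the two arcs is present. -/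
structure Tournament (r : ℕ) where
  arc : Fin r → Fin r → Bool
  loopless : ∀ i, arc i i = false
  oneOf : ∀ i j, i ≠ j → (arc i j = true ↔ ¬ arc j i = true)

/-- `S` carries a transitive subtournament: there is a linear ordering of `S` such
that the arc `(u,v)` is present whenever `u` precedes `v`. -/
def Tournament.HasTransTournOn {r : ℕ} (T : Tournament r) (S : Finset (Fin r)) : Prop :=
  ∃ l : List (Fin r), l.Nodup ∧ l.toFinset = S ∧
    l.Pairwise fun u v => T.arc u v = true

/-!
Orient every pair of vertices by an independent fair coin. For an embedding `e : Fin k ↪ Fin n`,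
the event that `e` lists a transitive subtournament in increasing order fixes the coins of the
`k.choose 2` pairs inside its image, so it has probability `2 ^ (-k.choose 2)`; it is independent
of all events sharing no pair with it, and at most `D = k.choose 2 * k ^ 2 * n ^ (k - 2)` events
share a pair with it. The hypothesis on `n` and `k` gives `exp 1 * (D + 1) ≤ 2 ^ k.choose 2`, so the
symmetric Lovász local lemma gives an orientation avoiding every event.
-/

open Finset

lemma exp_neg_one_le_one_sub_one_div_pow {D : ℕ} (hD : 0 < D) :
    Real.exp (-1) ≤ (1 - 1 / ((D : ℝ) + 1)) ^ D := by
  have hD' : (0 : ℝ) < D := by exact_mod_cast hD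
  -- `1 + 1/D ≤ exp (1/D)`, inverted and raised to the power `D`
  have hbase : Real.exp (-(1 / D)) ≤ 1 - 1 / ((D : ℝ) + 1) := by
    have h := Real.add_one_le_exp (1 / (D : ℝ))
    rw [Real.exp_neg, show 1 - 1 / ((D : ℝ) + 1) = (1 / (D : ℝ) + 1)⁻¹ by field_simp; ring]
    exact inv_anti₀ (by positivity) h
  calc Real.exp (-1) = Real.exp (-(1 / D)) ^ D := by
        rw [← Real.exp_nat_mul]; congr 1; field_simp
    _ ≤ _ := pow_le_pow_left₀ (Real.exp_pos _).le hbase D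

section LocalLemma

variable {ι κ : Type*} [Fintype ι] [DecidableEq ι] [Fintype κ] [DecidableEq κ]

lemma card_inter_mul_two_pow_eq {A B : Finset (ι → Bool)} {s : Finset ι}
    (hA : DependsOn (· ∈ A) (↑s)ᶜ) (hB : DependsOn (· ∈ B) s) :
    #(A ∩ B) * 2 ^ Fintype.card ι = #A * #B := by
  have mem_A : ∀ a ∈ A, ∀ b, s.piecewise b a ∈ A := fun a ha b =>
    (propext_iff.1 (hA fun _ hp => piecewise_eq_of_notMem _ _ _ hp)).2 ha
  have mem_B : ∀ b ∈ B, ∀ a, s.piecewise b a ∈ B := fun b hb a =>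
    (propext_iff.1 (hB fun _ hp => piecewise_eq_of_mem _ _ _ hp)).2 hb
  -- exchanging the `s`-coordinates of `a` and `b` is an involution of `(ι → Bool) × (ι → Bool)`
  -- that maps `A ×ˢ B` onto `(A ∩ B) ×ˢ univ`
  have key : #(A ×ˢ B) = #((A ∩ B) ×ˢ (univ : Finset (ι → Bool))) := by
    refine card_nbij' (fun z => (s.piecewise z.2 z.1, s.piecewise z.1 z.2))
      (fun z => (s.piecewise z.2 z.1, s.piecewise z.1 z.2)) ?_ ?_ ?_ ?_
    · rintro ⟨a, b⟩ hab
      obtain ⟨ha, hb⟩ := mem_product.1 hab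
      exact mem_product.2 ⟨mem_inter.2 ⟨mem_A a ha b, mem_B b hb a⟩, mem_univ _⟩
    · rintro ⟨c, d⟩ hcd
      have hc := (mem_product.1 hcd).1
      exact mem_product.2 ⟨mem_A c (mem_inter.1 hc).1 d, mem_B c (mem_inter.1 hc).2 d⟩
    all_goals rintro ⟨a, b⟩ -; ext p <;> by_cases hp : p ∈ s <;> simp [hp]
  rw [card_product, card_product, card_univ, Fintype.card_fun, Fintype.card_bool] at key
  exact key.symm

lemma card_mul_two_pow_le_of_eqOn {A : Finset (ι → Bool)} {s : Finset ι}
    (hA : ∀ ω ∈ A, ∀ ω' ∈ A, ∀ p ∈ s, ω p = ω' p) :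
    #A * 2 ^ #s ≤ 2 ^ Fintype.card ι := by
  have restrict_injOn : Set.InjOn (fun (ω : ι → Bool) (q : ↥sᶜ) => ω q) A := by
    intro ω hω ω' hω' h
    funext p
    by_cases hp : p ∈ s
    · exact hA ω hω ω' hω' p hp
    · exact congrFun h ⟨p, mem_compl.2 hp⟩
  have hcard : #A ≤ 2 ^ (Fintype.card ι - #s) := by
    simpa [card_compl] using card_le_card_of_injOn _ (fun _ _ => mem_univ _) restrict_injOn
  calc #A * 2 ^ #s ≤ 2 ^ (Fintype.card ι - #s) * 2 ^ #s := Nat.mul_le_mul_right _ hcard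
    _ = 2 ^ Fintype.card ι := by rw [← pow_add, Nat.sub_add_cancel (card_le_univ s)]

variable (A : κ → Finset (ι → Bool))

def avoiding (S : Finset κ) : Finset (ι → Bool) := {ω | ∀ j ∈ S, ω ∉ A j}

variable {A}

lemma avoiding_empty : avoiding A ∅ = univ := by simp [avoiding]

lemma avoiding_anti {S T : Finset κ} (h : S ⊆ T) : avoiding A T ⊆ avoiding A S :=
  fun _ hω => by simp only [avoiding, mem_filter] at hω ⊢; exact ⟨hω.1, fun j hj => hω.2 j (h hj)⟩

lemma card_avoiding_insert_add (S : Finset κ) (j : κ) :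
    #(avoiding A (insert j S)) + #(avoiding A S ∩ A j) = #(avoiding A S) := by
  have : avoiding A (insert j S) = avoiding A S \ A j := by
    ext ω; simp [avoiding, and_comm]
  rw [this, card_sdiff_add_card_inter]

lemma dependsOn_mem_avoiding {S : Finset κ} {t : Set ι}
    (h : ∀ j ∈ S, DependsOn (· ∈ A j) t) : DependsOn (· ∈ avoiding A S) t := by
  intro ω ω' hωω'
  simp only [avoiding, mem_filter, mem_univ, true_and]
  exact propext <| forall₂_congr fun j hj => not_congr (propext_iff.1 (h j hj hωω'))

lemma one_sub_pow_mul_card_avoiding_le {x : ℝ} (hx : x ≤ 1) (S T : Finset κ)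
    (h : ∀ U ⊆ T, ∀ j ∈ T, j ∉ U →
      (#(avoiding A (S ∪ U) ∩ A j) : ℝ) ≤ x * #(avoiding A (S ∪ U))) :
    (1 - x) ^ #T * #(avoiding A S) ≤ #(avoiding A (S ∪ T)) := by
  induction T using Finset.induction_on with
  | empty => simp
  | @insert j T hj ih =>
    have ih' := ih fun U hU i hi => h U (hU.trans (subset_insert _ _)) i (mem_insert_of_mem hi)
    have hj' := h T (subset_insert _ _) j (mem_insert_self _ _) hj
    have hdrop : (#(avoiding A (insert j (S ∪ T))) : ℝ) + #(avoiding A (S ∪ T) ∩ A j)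
        = #(avoiding A (S ∪ T)) := by exact_mod_cast card_avoiding_insert_add (S ∪ T) j
    rw [card_insert_of_notMem hj, union_insert]
    calc (1 - x) ^ (#T + 1) * #(avoiding A S)
        = (1 - x) * ((1 - x) ^ #T * #(avoiding A S)) := by ring
      _ ≤ (1 - x) * #(avoiding A (S ∪ T)) := by gcongr
      _ ≤ #(avoiding A (insert j (S ∪ T))) := by linarith

variable (vbl : κ → Finset ι) (hdep : ∀ i, DependsOn (· ∈ A i) (vbl i)) {D : ℕ}
  (hD : ∀ i, #{j | ¬Disjoint (vbl i) (vbl j)} ≤ D)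
include hdep hD

section Asymmetric

variable {x : ℝ} (hA : ∀ i, (#(A i) : ℝ) ≤ x * (1 - x) ^ D * 2 ^ Fintype.card ι)
include hA

/-- The key estimate of the local lemma: conditioned on avoiding the events in `S`, every
event has probability at most `x`. -/
lemma card_avoiding_inter_le (hx0 : 0 ≤ x) (hx1 : x ≤ 1) (S : Finset κ) (i : κ) :
    (#(avoiding A S ∩ A i) : ℝ) ≤ x * #(avoiding A S) := by
  induction S using Finset.strongInduction generalizing i with
  | H S ih =>
  set far := S.filter fun j => Disjoint (vbl i) (vbl j)
  set near := S.filter fun j => ¬Disjoint (vbl i) (vbl j)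
  have hfar : far ⊆ S := filter_subset _ _
  have hnear : #near ≤ D := (card_le_card (filter_subset_filter _ (subset_univ S))).trans (hD i)
  -- the events far from `A i` do not share variables with it, hence are independent of it
  have hindep : #(avoiding A far ∩ A i) * 2 ^ Fintype.card ι = #(avoiding A far) * #(A i) := by
    refine card_inter_mul_two_pow_eq (dependsOn_mem_avoiding fun j hj => (hdep j).mono ?_) (hdep i)
    exact Set.subset_compl_iff_disjoint_left.2 (disjoint_coe.2 (mem_filter.1 hj).2)
  have hpeel : (1 - x) ^ #near * #(avoiding A far) ≤ #(avoiding A S) := by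
    rw [← filter_union_filter_not_eq (fun j => Disjoint (vbl i) (vbl j)) S]
    refine one_sub_pow_mul_card_avoiding_le hx1 far near fun U hU j hj hjU => ih _ ?_ j
    refine (ssubset_iff_of_subset (union_subset hfar (hU.trans (filter_subset _ _)))).2
      ⟨j, (mem_filter.1 hj).1, fun h => ?_⟩
    rcases mem_union.1 h with h | h
    · exact (mem_filter.1 hj).2 (mem_filter.1 h).2
    · exact hjU h
  have h2pos : (0 : ℝ) < 2 ^ Fintype.card ι := by positivity
  calc (#(avoiding A S ∩ A i) : ℝ) ≤ #(avoiding A far ∩ A i) := by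
        exact_mod_cast card_le_card (inter_subset_inter_right (avoiding_anti hfar))
    _ = #(avoiding A far) * #(A i) / 2 ^ Fintype.card ι := by
        rw [eq_div_iff h2pos.ne']; exact_mod_cast hindep
    _ ≤ #(avoiding A far) * (x * (1 - x) ^ D) := by
        rw [div_le_iff₀ h2pos, mul_assoc]; gcongr; exact hA i
    _ ≤ #(avoiding A far) * (x * (1 - x) ^ #near) := by
        have := pow_le_pow_of_le_one (sub_nonneg.2 hx1) (by linarith) hnear
        gcongr
    _ ≤ x * #(avoiding A S) := by nlinarith

/-- The Lovász local lemma, counting version on the cube `ι → Bool`. -/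
theorem exists_forall_notMem_of_local_lemma (hx0 : 0 ≤ x) (hx1 : x < 1) :
    ∃ ω, ∀ i, ω ∉ A i := by
  have hpeel := one_sub_pow_mul_card_avoiding_le hx1.le ∅ univ
    fun U _ j _ _ => card_avoiding_inter_le vbl hdep hD hA hx0 hx1.le _ j
  simp only [empty_union, avoiding_empty, card_univ, Fintype.card_fun, Fintype.card_bool] at hpeel
  have hpos : 0 < #(avoiding A univ) := by
    push_cast at hpeel
    have : (0 : ℝ) < (1 - x) ^ Fintype.card κ * 2 ^ Fintype.card ι := by
      have : 0 < 1 - x := by linarith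
      positivity
    exact_mod_cast this.trans_le hpeel
  obtain ⟨ω, hω⟩ := card_pos.1 hpos
  exact ⟨ω, fun i => (mem_filter.1 hω).2 i (mem_univ i)⟩

end Asymmetric

theorem exists_forall_notMem_of_exp_mul_card_le (hD0 : 0 < D)
    (hA : ∀ i, Real.exp 1 * (D + 1) * #(A i) ≤ 2 ^ Fintype.card ι) : ∃ ω, ∀ i, ω ∉ A i := by
  have hD1 : (1 : ℝ) < D + 1 := by norm_cast; omega
  refine exists_forall_notMem_of_local_lemma vbl hdep hD (x := 1 / (D + 1)) (fun i => ?_)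
    (by positivity) ((div_lt_one (by linarith)).2 hD1)
  have hpow := exp_neg_one_le_one_sub_one_div_pow hD0
  rw [Real.exp_neg] at hpow
  calc (#(A i) : ℝ) = (Real.exp 1 * (D + 1) * #(A i)) * ((Real.exp 1)⁻¹ * (1 / (D + 1))) := by
        field_simp
    _ ≤ 2 ^ Fintype.card ι * ((1 - 1 / (D + 1)) ^ D * (1 / (D + 1))) := by
        gcongr; exact hA i
    _ = 1 / (D + 1) * (1 - 1 / (D + 1)) ^ D * 2 ^ Fintype.card ι := by ring

end LocalLemma

lemma card_embedding_forall_mem_le {α β : Type*} [Fintype α] [DecidableEq α] [Fintype β]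
    [DecidableEq β] (u : Finset α) (R : Finset β) :
    #{f : α ↪ β | ∀ a ∈ u, f a ∈ R} ≤ #R ^ #u * Fintype.card β ^ (Fintype.card α - #u) := by
  calc #{f : α ↪ β | ∀ a ∈ u, f a ∈ R}
      ≤ #(Fintype.piFinset fun a => if a ∈ u then R else univ) := by
        refine card_le_card_of_injOn (⇑) (fun f hf => ?_) DFunLike.coe_injective.injOn
        rw [mem_coe, mem_filter] at hf
        refine Fintype.mem_piFinset.2 fun a => ?_
        split_ifs with ha
        exacts [hf.2 a ha, mem_univ _]
    _ = #R ^ #u * Fintype.card β ^ (Fintype.card α - #u) := by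
        simp only [Fintype.card_piFinset, apply_ite card, card_univ]
        rw [prod_ite, filter_mem_eq_inter, univ_inter, prod_const, prod_const, filter_not,
          filter_mem_eq_inter, univ_inter, card_univ_sdiff]

namespace Tournament

variable {n k : ℕ}

-- Coins are indexed by all of `Finset (Fin n)`; only the two-element sets are read.
def ofOrientation (ω : Finset (Fin n) → Bool) : Tournament n where
  arc a b := if a < b then ω {a, b} else if b < a then !ω {a, b} else false
  loopless a := by simp
  oneOf a b hab := by
    rcases hab.lt_or_gt with h | h <;> simp [h, h.not_gt, pair_comm b a]

lemma ofOrientation_arc_eq_iff {ω ω' : Finset (Fin n) → Bool} {a b : Fin n} (hab : a ≠ b) :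
    (ofOrientation ω).arc a b = (ofOrientation ω').arc a b ↔ ω {a, b} = ω' {a, b} := by
  rcases hab.lt_or_gt with h | h <;> simp [ofOrientation, h, h.not_gt]

-- Indexing by embeddings rather than by `k`-sets makes each event a single cylinder.
def transEvent (e : Fin k ↪ Fin n) : Finset (Finset (Fin n) → Bool) :=
  {ω | ∀ i j, i < j → (ofOrientation ω).arc (e i) (e j)}

lemma pair_mem_powersetCard_map (e : Fin k ↪ Fin n) {i j : Fin k} (hij : i ≠ j) :
    {e i, e j} ∈ powersetCard 2 (univ.map e) := by
  rw [mem_powersetCard, card_pair (e.injective.ne hij)]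
  exact ⟨insert_subset (mem_map_of_mem _ (mem_univ _))
    (singleton_subset_iff.2 (mem_map_of_mem _ (mem_univ _))), rfl⟩

lemma dependsOn_mem_transEvent (e : Fin k ↪ Fin n) :
    DependsOn (· ∈ transEvent e) ↑(powersetCard 2 (univ.map e)) := by
  intro ω ω' h
  simp only [transEvent, mem_filter, mem_univ, true_and]
  refine propext <| forall₃_congr fun i j hij => ?_
  rw [(ofOrientation_arc_eq_iff (e.injective.ne hij.ne)).2
    (h _ (pair_mem_powersetCard_map e hij.ne))]

lemma eq_of_mem_transEvent {e : Fin k ↪ Fin n} {ω ω' : Finset (Fin n) → Bool}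
    (hω : ω ∈ transEvent e) (hω' : ω' ∈ transEvent e) :
    ∀ t ∈ powersetCard 2 (univ.map e), ω t = ω' t := by
  intro t ht
  obtain ⟨hsub, hcard⟩ := mem_powersetCard.1 ht
  obtain ⟨a, b, hab, rfl⟩ := card_eq_two.1 hcard
  obtain ⟨i, -, rfl⟩ := mem_map.1 (hsub (mem_insert_self _ _))
  obtain ⟨j, -, rfl⟩ := mem_map.1 (hsub (mem_insert_of_mem (mem_singleton_self _)))
  simp only [transEvent, mem_filter, mem_univ, true_and] at hω hω'
  rcases (e.injective.ne_iff.1 hab).lt_or_gt with h | h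
  · exact (ofOrientation_arc_eq_iff hab).1 ((hω i j h).trans (hω' i j h).symm)
  · rw [pair_comm]
    exact (ofOrientation_arc_eq_iff hab.symm).1 ((hω j i h).trans (hω' j i h).symm)

lemma exp_mul_card_transEvent_le {D : ℕ}
    (hD : Real.exp 1 * (D + 1) ≤ 2 ^ k.choose 2) (e : Fin k ↪ Fin n) :
    Real.exp 1 * (D + 1) * #(transEvent e) ≤ 2 ^ Fintype.card (Finset (Fin n)) := by
  have h := card_mul_two_pow_le_of_eqOn (A := transEvent e) fun _ hω _ hω' =>
    eq_of_mem_transEvent hω hω'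
  rw [card_powersetCard, card_map, card_univ, Fintype.card_fin, mul_comm] at h
  calc Real.exp 1 * (D + 1) * #(transEvent e) ≤ 2 ^ k.choose 2 * #(transEvent e) := by gcongr
    _ ≤ 2 ^ Fintype.card (Finset (Fin n)) := by exact_mod_cast h

lemma card_not_disjoint_le (e : Fin k ↪ Fin n) :
    #{e' : Fin k ↪ Fin n |
        ¬Disjoint (powersetCard 2 (univ.map e)) (powersetCard 2 (univ.map e'))}
      ≤ k.choose 2 * (k ^ 2 * n ^ (k - 2)) := by
  -- a pair of vertices shared with `e` is the image under `e'` of a pair of positions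
  have hcover : ({e' : Fin k ↪ Fin n |
        ¬Disjoint (powersetCard 2 (univ.map e)) (powersetCard 2 (univ.map e'))} : Finset _)
      ⊆ (powersetCard 2 univ).biUnion
          fun u => {e' : Fin k ↪ Fin n | ∀ i ∈ u, e' i ∈ univ.map e} := by
    intro e' he'
    obtain ⟨t, ht, ht'⟩ := not_disjoint_iff.1 (mem_filter.1 he').2
    obtain ⟨hsub, hcard⟩ := mem_powersetCard.1 ht
    obtain ⟨a, b, hab, rfl⟩ := card_eq_two.1 hcard
    obtain ⟨i, -, rfl⟩ := mem_map.1 ((mem_powersetCard.1 ht').1 (mem_insert_self _ _))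
    obtain ⟨j, -, rfl⟩ :=
      mem_map.1 ((mem_powersetCard.1 ht').1 (mem_insert_of_mem (mem_singleton_self _)))
    refine mem_biUnion.2 ⟨{i, j}, mem_powersetCard.2 ⟨subset_univ _, card_pair
      (e'.injective.ne_iff.1 hab)⟩, mem_filter.2 ⟨mem_univ _, ?_⟩⟩
    simp only [mem_insert, mem_singleton, forall_eq_or_imp, forall_eq]
    exact ⟨hsub (mem_insert_self _ _), hsub (mem_insert_of_mem (mem_singleton_self _))⟩
  calc _ ≤ _ := card_le_card hcover
    _ ≤ ∑ u ∈ powersetCard 2 univ, #{e' : Fin k ↪ Fin n | ∀ i ∈ u, e' i ∈ univ.map e} :=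
        card_biUnion_le
    _ ≤ ∑ u ∈ powersetCard 2 (univ : Finset (Fin k)), k ^ 2 * n ^ (k - 2) := by
        refine sum_le_sum fun u hu => ?_
        have h := card_embedding_forall_mem_le u (univ.map e)
        rw [card_map, card_univ, (mem_powersetCard.1 hu).2, Fintype.card_fin,
          Fintype.card_fin] at h
        exact le_of_eq_of_le (by congr) h
    _ = _ := by rw [sum_const, card_powersetCard, card_univ, Fintype.card_fin, smul_eq_mul]

lemma HasTransTournOn.exists_embedding {T : Tournament n} {S : Finset (Fin n)}
    (h : T.HasTransTournOn S) : ∃ e : Fin #S ↪ Fin n, ∀ i j, i < j → T.arc (e i) (e j) := by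
  obtain ⟨l, hnd, rfl, hpw⟩ := h
  rw [List.toFinset_card_of_nodup hnd]
  exact ⟨⟨l.get, List.nodup_iff_injective_get.1 hnd⟩,
    fun i j hij => List.pairwise_iff_get.1 hpw i j hij⟩

end Tournament

lemma one_63_le_two_rpow_071 : (1.63 : ℝ) ≤ 2 ^ (0.71 : ℝ) := by
  -- compare hundredth powers: `1.63 ^ 100 ≤ 2 ^ 71`
  have hpow : ((2 : ℝ) ^ (0.71 : ℝ)) ^ (100 : ℕ) = 2 ^ (71 : ℕ) := by
    rw [← Real.rpow_natCast, ← Real.rpow_mul zero_le_two, ← Real.rpow_natCast]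
    norm_num
  refine le_of_pow_le_pow_left₀ (n := 100) (by norm_num) (by positivity) ?_
  rw [hpow]
  norm_num

lemma exp_one_mul_le_two_pow_choose {n k : ℕ} (hk : 5 ≤ k) (hn : 0 < n)
    (h : ((k : ℝ) - 2) * Real.logb 2 n < k * (k - 1) / 2 - 4 * Real.logb 2 k - 0.71) :
    Real.exp 1 * ((k.choose 2 * (k ^ 2 * n ^ (k - 2)) : ℕ) + 1) ≤ 2 ^ k.choose 2 := by
  have hn' : (0 : ℝ) < n := by exact_mod_cast hn
  have hk' : (5 : ℝ) ≤ k := by exact_mod_cast hk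
  set Q : ℝ := n ^ (k - 2) * k ^ 4 with hQ
  have hQ625 : 625 ≤ Q := by
    have : (1 : ℝ) ≤ n ^ (k - 2) := one_le_pow₀ (by exact_mod_cast hn)
    have : (625 : ℝ) ≤ k ^ 4 := by nlinarith [pow_le_pow_left₀ (by norm_num) hk' 4]
    nlinarith
  have hQ_lt : Q * 2 ^ (0.71 : ℝ) < 2 ^ k.choose 2 := by
    have hlog : Real.logb 2 Q = (k - 2) * Real.logb 2 n + 4 * Real.logb 2 k := by
      rw [hQ, Real.logb_mul (by positivity) (by positivity), Real.logb_pow, Real.logb_pow,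
        Nat.cast_sub (by omega : 2 ≤ k)]
      push_cast; ring
    have h' : Q < 2 ^ ((k.choose 2 : ℝ) - 0.71) := by
      refine (Real.logb_lt_iff_lt_rpow one_lt_two (by positivity)).1 ?_
      rw [hlog, Nat.cast_choose_two]
      linarith
    rwa [Real.rpow_sub two_pos, Real.rpow_natCast, lt_div_iff₀ (by positivity)] at h'
  have hD : ((k.choose 2 * (k ^ 2 * n ^ (k - 2)) : ℕ) : ℝ) ≤ Q / 2 := by
    have : Q / 2 - ((k.choose 2 * (k ^ 2 * n ^ (k - 2)) : ℕ) : ℝ) = k ^ 3 * n ^ (k - 2) / 2 := by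
      push_cast; rw [Nat.cast_choose_two, hQ]; ring
    have : (0 : ℝ) ≤ k ^ 3 * n ^ (k - 2) / 2 := by positivity
    linarith
  calc Real.exp 1 * ((k.choose 2 * (k ^ 2 * n ^ (k - 2)) : ℕ) + 1)
      ≤ 2.7182818286 * (Q / 2 + 1) :=
        mul_le_mul Real.exp_one_lt_d9.le (by linarith) (by positivity) (by norm_num)
    _ ≤ Q * 1.63 := by linarith
    _ ≤ Q * 2 ^ (0.71 : ℝ) := by gcongr; exact one_63_le_two_rpow_071
    _ ≤ 2 ^ k.choose 2 := hQ_lt.le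

theorem stmt18_general (n k : ℕ) (hk : 5 ≤ k)
    (h : ((k : ℝ) - 2) * Real.logb 2 (n : ℝ) <
        (k : ℝ) * ((k : ℝ) - 1) / 2 - 4 * Real.logb 2 (k : ℝ) - 0.71) :
    ∃ T : Tournament n, ∀ S : Finset (Fin n), S.card = k →
      ¬ T.HasTransTournOn S := by
  rcases n.eq_zero_or_pos with rfl | hn
  · exact ⟨Tournament.ofOrientation fun _ => false, fun S hS _ => by
      rw [eq_empty_of_isEmpty S, card_empty] at hS; omega⟩
  have hD : 0 < k.choose 2 * (k ^ 2 * n ^ (k - 2)) := by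
    have := Nat.choose_pos (by omega : 2 ≤ k)
    positivity
  obtain ⟨ω, hω⟩ := exists_forall_notMem_of_exp_mul_card_le (fun e => powersetCard 2 (univ.map e))
    Tournament.dependsOn_mem_transEvent Tournament.card_not_disjoint_le hD
    (Tournament.exp_mul_card_transEvent_le (exp_one_mul_le_two_pow_choose hk hn h))
  refine ⟨Tournament.ofOrientation ω, fun S hS hT => ?_⟩
  obtain ⟨e, he⟩ := hT.exists_embedding
  subst hS
  exact hω e (by simpa [Tournament.transEvent] using he)

theorem stmt18 (n k : ℕ) (hk : 5 ≤ k) (hn : 2 * k ^ 2 ≤ n)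
    (h : ((k : ℝ) - 2) * Real.logb 2 (n : ℝ) <
        (k : ℝ) * ((k : ℝ) - 1) / 2 - 4 * Real.logb 2 (k : ℝ) - 0.71) :
    ∃ T : Tournament n, ∀ S : Finset (Fin n), S.card = k →
      ¬ T.HasTransTournOn S :=
  stmt18_general n k hk h
end
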